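/- Let f : ℝⁿ → ℝ ∪ {∞} be a proper, closed, μ-strongly convex function and let η > 0. Then the Moreau envelope f^η(x) := min_y { f(y) + (1/(2η))‖y − x‖² } is μ/(ημ + 1)-strongly convex on ℝⁿ. -/
import Mathlib

open Set Metric

variable {E : Type*} [NormedAddCommGroup E] [InnerProductSpace ℝ E]

private lemma norm_combo' (u v : E) {a b : ℝ} (hab : a + b = 1) :
    ‖a • u + b • v‖ ^ 2 = a * ‖u‖ ^ 2 + b * ‖v‖ ^ 2 - a * b * ‖u - v‖ ^ 2 := by
  rw [norm_add_sq_real, norm_sub_sq_real, norm_smul, norm_smul,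
    real_inner_smul_left, real_inner_smul_right, mul_pow, mul_pow,
    Real.norm_eq_abs, Real.norm_eq_abs, sq_abs, sq_abs]
  obtain rfl := eq_sub_of_add_eq hab
  ring

private lemma quad_bound' {μ η : ℝ} (hμ : 0 < μ) (hη : 0 < η) (d e : E) :
    η * μ * ‖e‖ ^ 2 ≤ (η * μ + 1) * (η * μ * ‖d‖ ^ 2 + ‖d - e‖ ^ 2) := by
  have h2 : (0:ℝ) ≤ ‖(η * μ + 1) • d - e‖ ^ 2 := sq_nonneg _
  rw [norm_sub_sq_real, norm_smul, real_inner_smul_left, Real.norm_eq_abs, mul_pow, sq_abs] at h2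
  rw [norm_sub_sq_real]
  nlinarith [h2]

private lemma div_helper' {μ η X Y Z : ℝ} (hμ : 0 < μ) (hη : 0 < η)
    (h : η * μ * Z ≤ (η * μ + 1) * (η * μ * X + Y)) :
    μ / (η * μ + 1) / 2 * Z ≤ μ / 2 * X + Y / (2 * η) := by
  have hd : (0:ℝ) < 2 * η * (η * μ + 1) := by positivity
  have key : μ / (η * μ + 1) / 2 * Z - (μ / 2 * X + Y / (2 * η))
      = (η * μ * Z - (η * μ + 1) * (η * μ * X + Y)) / (2 * η * (η * μ + 1)) := by
    field_simp
  have h2 : (η * μ * Z - (η * μ + 1) * (η * μ * X + Y)) / (2 * η * (η * μ + 1)) ≤ 0 :=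
    div_nonpos_of_nonpos_of_nonneg (by linarith) hd.le
  linarith [key, h2]

set_option maxHeartbeats 1000000 in
/-- The Moreau envelope of a proper closed `μ`-strongly convex function is
`μ/(ημ+1)`-strongly convex. -/
theorem stmt2 {n : ℕ} (f : EuclideanSpace ℝ (Fin n) → ℝ) (μ η : ℝ)
    (hμ : 0 < μ) (hη : 0 < η)
    (hsc : StrongConvexOn Set.univ μ f) (hlsc : LowerSemicontinuous f) :
    StrongConvexOn Set.univ (μ / (η * μ + 1))
      (fun x => ⨅ y : EuclideanSpace ℝ (Fin n), (f y + ‖y - x‖ ^ 2 / (2 * η))) := by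
  have hconv : ConvexOn ℝ Set.univ f := hsc.convexOn (fun r => by positivity)
  have hcont : ContinuousOn f Set.univ := hconv.continuousOn isOpen_univ
  obtain ⟨w, hw, hwmin⟩ := (isCompact_closedBall (0 : EuclideanSpace ℝ (Fin n)) 1).exists_isMinOn
    ⟨0, by simp⟩ (hcont.mono (subset_univ _))
  set L : ℝ := min (f w) (f 0 - (f w - f 0 - μ/2)^2 / (2*μ)) with hLdef
  have hlow : ∀ y, L ≤ f y := by
    intro y
    rcases le_or_gt ‖y‖ 1 with h1 | h1
    · exact le_trans (min_le_left _ _)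
        (hwmin (by simpa [mem_closedBall, dist_eq_norm] using h1))
    · have ht0 : (0:ℝ) < ‖y‖ := by linarith
      have htne : ‖y‖ ≠ 0 := ne_of_gt ht0
      have ha : (0:ℝ) ≤ ‖y‖⁻¹ := by positivity
      have hb : (0:ℝ) ≤ 1 - ‖y‖⁻¹ := by
        have h2 : ‖y‖⁻¹ ≤ 1 := by
          rw [inv_le_one_iff₀]; right; linarith
        linarith
      have hab : ‖y‖⁻¹ + (1 - ‖y‖⁻¹) = 1 := by ring
      have hkey := hsc.2 (mem_univ y) (mem_univ (0 : EuclideanSpace ℝ (Fin n))) ha hb hab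
      simp only [smul_zero, add_zero, sub_zero, smul_eq_mul] at hkey
      have hv : ‖y‖⁻¹ • y ∈ closedBall (0 : EuclideanSpace ℝ (Fin n)) 1 := by
        simp [mem_closedBall, dist_eq_norm, norm_smul, abs_of_nonneg ha,
          inv_mul_cancel₀ htne]
      have hB := hwmin hv
      have hmul := mul_le_mul_of_nonneg_left (hB.trans hkey) ht0.le
      have hexp : ‖y‖ * (‖y‖⁻¹ * f y + (1 - ‖y‖⁻¹) * f 0
            - ‖y‖⁻¹ * (1 - ‖y‖⁻¹) * (μ/2 * ‖y‖^2))
          = f y + (‖y‖ - 1) * f 0 - μ/2 * (‖y‖^2 - ‖y‖) := by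
        field_simp
      rw [hexp] at hmul
      have hq : 0 ≤ μ/2 * ‖y‖^2 + (f w - f 0 - μ/2) * ‖y‖ + (f w - f 0 - μ/2)^2/(2*μ) := by
        have hid : μ/2 * ‖y‖^2 + (f w - f 0 - μ/2) * ‖y‖ + (f w - f 0 - μ/2)^2/(2*μ)
            = (μ * ‖y‖ + (f w - f 0 - μ/2))^2 / (2*μ) := by
          field_simp
          ring
        rw [hid]; positivity
      refine le_trans (min_le_right _ _) ?_
      nlinarith [hmul, hq]
  have hbdd : ∀ z : EuclideanSpace ℝ (Fin n),
      BddBelow (Set.range fun y => f y + ‖y - z‖^2/(2*η)) := by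
    intro z
    refine ⟨L, ?_⟩
    rintro _ ⟨y, rfl⟩
    have h0 : 0 ≤ ‖y - z‖^2/(2*η) := by positivity
    have := hlow y
    dsimp only
    linarith
  refine ⟨convex_univ, ?_⟩
  intro x₁ _ x₂ _ a b ha hb hab
  simp only [smul_eq_mul]
  rcases ha.eq_or_lt with ha0 | ha'
  · have hb1 : b = 1 := by linarith
    subst hb1
    rw [← ha0]
    simp
  rcases hb.eq_or_lt with hb0 | hb'
  · have ha1 : a = 1 := by linarith
    subst ha1
    rw [← hb0]
    simp
  have key : ∀ y₁ y₂ : EuclideanSpace ℝ (Fin n),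
      (⨅ y, f y + ‖y - (a • x₁ + b • x₂)‖ ^ 2 / (2 * η))
        + a*b*(μ/(η*μ+1)/2*‖x₁-x₂‖^2)
      ≤ a*(f y₁ + ‖y₁-x₁‖^2/(2*η)) + b*(f y₂ + ‖y₂-x₂‖^2/(2*η)) := by
    intro y₁ y₂
    have h1 : (⨅ y, f y + ‖y - (a • x₁ + b • x₂)‖ ^ 2 / (2 * η))
        ≤ f (a•y₁+b•y₂) + ‖(a•y₁+b•y₂) - (a•x₁+b•x₂)‖^2/(2*η) := ciInf_le (hbdd _) _
    have h2 : (a•y₁+b•y₂) - (a•x₁+b•x₂) = a•(y₁-x₁) + b•(y₂-x₂) := by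
      rw [smul_sub, smul_sub]; abel
    have h3 : ‖a•(y₁-x₁) + b•(y₂-x₂)‖^2
        = a*‖y₁-x₁‖^2 + b*‖y₂-x₂‖^2 - a*b*‖(y₁-y₂)-(x₁-x₂)‖^2 := by
      rw [norm_combo' _ _ hab, sub_sub_sub_comm]
    have h4 := hsc.2 (mem_univ y₁) (mem_univ y₂) ha'.le hb'.le hab
    simp only [smul_eq_mul] at h4
    have h5 := div_helper' hμ hη (quad_bound' hμ hη (y₁-y₂) (x₁-x₂))
    have h6 := mul_le_mul_of_nonneg_left h5 (mul_nonneg ha'.le hb'.le)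
    rw [h2, h3] at h1
    have h7 : (a*‖y₁-x₁‖^2 + b*‖y₂-x₂‖^2 - a*b*‖(y₁-y₂)-(x₁-x₂)‖^2)/(2*η)
        = a*(‖y₁-x₁‖^2/(2*η)) + b*(‖y₂-x₂‖^2/(2*η))
          - a*b*(‖(y₁-y₂)-(x₁-x₂)‖^2/(2*η)) := by ring
    rw [h7] at h1
    linarith [h1, h4, h6]
  have step1 : ∀ y₂ : EuclideanSpace ℝ (Fin n),
      (⨅ y, f y + ‖y - (a • x₁ + b • x₂)‖ ^ 2 / (2 * η))
        + a*b*(μ/(η*μ+1)/2*‖x₁-x₂‖^2) - b*(f y₂ + ‖y₂-x₂‖^2/(2*η))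
      ≤ a * (⨅ y, f y + ‖y - x₁‖ ^ 2 / (2 * η)) := by
    intro y₂
    have h8 : ((⨅ y, f y + ‖y - (a • x₁ + b • x₂)‖ ^ 2 / (2 * η))
          + a*b*(μ/(η*μ+1)/2*‖x₁-x₂‖^2) - b*(f y₂ + ‖y₂-x₂‖^2/(2*η)))/a
        ≤ ⨅ y, f y + ‖y - x₁‖ ^ 2 / (2 * η) := by
      refine le_ciInf fun y₁ => ?_
      rw [div_le_iff₀ ha']
      linarith [key y₁ y₂]
    rw [div_le_iff₀ ha'] at h8
    linarith
  have step2 : ((⨅ y, f y + ‖y - (a • x₁ + b • x₂)‖ ^ 2 / (2 * η))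
        + a*b*(μ/(η*μ+1)/2*‖x₁-x₂‖^2)
        - a * (⨅ y, f y + ‖y - x₁‖ ^ 2 / (2 * η)))/b
      ≤ ⨅ y, f y + ‖y - x₂‖ ^ 2 / (2 * η) := by
    refine le_ciInf fun y₂ => ?_
    rw [div_le_iff₀ hb']
    linarith [step1 y₂]
  rw [div_le_iff₀ hb'] at step2
  linarith [step2]
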